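/- Let G be a network with request R and extended graph G_ext. Let x : S → {0,1} and f : E_ext → ℕ satisfy (IP-1) f(δ⁺_{E_ext}(v)) = f(δ⁻_{E_ext}(v)) for all v ∈ V_G, (IP-2) f(δ⁺_{E_R}(W)) ≥ x_s for all W ⊆ V_G and s ∈ W∩S, f(o⁺,s) = x_s for all s ∈ S, f(o⁺,t) = 0 for all t ∈ T, and f(s,o⁻_S) ≥ x_s for all s ∈ S. Then x_s = 0 for every s ∈ S. (That is, if no terminal injects flow, then no Steiner node can be active: active Steiner nodes cannot absorb all super-source flow while satisfying the connectivity inequalities.) -/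

import Mathlib

/-! Formalization of the Constrained Virtual Steiner Arborescence Problem (CVSAP),
its single-commodity flow IP formulation, and related notions. -/

/-- Vertices of the extended graph: original vertices plus super source `src`,
super sink `sinkS` for Steiner nodes and super sink `sinkR` for the root. -/
inductive ExtV (V : Type) where
  | orig : V → ExtV V
  | src : ExtV V
  | sinkS : ExtV V
  | sinkR : ExtV V
deriving DecidableEq

open ExtV

/-- A (finite) capacitated directed network. -/
structure Network (V : Type) [DecidableEq V] where
  E : Finset (V × V)
  uE : V × V → ℕ
  cE : V × V → ℝ

/-- A request `R = (root, S, T, u_r, c_S, u_S)`. -/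
structure Request (V : Type) [DecidableEq V] where
  root : V
  S : Finset V
  T : Finset V
  ur : ℕ
  cS : V → ℝ
  uS : V → ℕ

variable {V : Type} [DecidableEq V]

/-- Well-formedness: root is neither terminal nor Steiner site, Steiner sites and terminals
are disjoint, and all costs are positive. -/
def RequestWF (N : Network V) (R : Request V) : Prop :=
  R.root ∉ R.T ∧ R.root ∉ R.S ∧ Disjoint R.S R.T ∧
    (∀ s ∈ R.S, 0 < R.cS s) ∧ (∀ e ∈ N.E, 0 < N.cE e)

/-- Edge set of the extended graph `G_ext`. -/
def Eext (N : Network V) (R : Request V) : Finset (ExtV V × ExtV V) :=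
  (N.E.image fun e => (orig e.1, orig e.2)) ∪
    ({(orig R.root, sinkR)} : Finset (ExtV V × ExtV V)) ∪
    (R.S.image fun s => (orig s, sinkS)) ∪
    (R.S.image fun s => (src, orig s)) ∪
    (R.T.image fun t => (src, orig t))

/-- `E_R`: the extended edges without the edges into the Steiner super sink. -/
def ERext (N : Network V) (R : Request V) : Finset (ExtV V × ExtV V) :=
  (Eext N R).filter fun e => e.2 ≠ sinkS

/-- Edges of `F` leaving node `v`. -/
def outV (F : Finset (ExtV V × ExtV V)) (v : ExtV V) : Finset (ExtV V × ExtV V) :=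
  F.filter fun e => e.1 = v

/-- Edges of `F` entering node `v`. -/
def inV (F : Finset (ExtV V × ExtV V)) (v : ExtV V) : Finset (ExtV V × ExtV V) :=
  F.filter fun e => e.2 = v

/-- Edges of `F` leaving the node set `W`. -/
def outSet (F : Finset (ExtV V × ExtV V)) (W : Finset (ExtV V)) : Finset (ExtV V × ExtV V) :=
  F.filter fun e => e.1 ∈ W ∧ e.2 ∉ W

/-- Total flow of `f` on the edge set `F`. -/
def fSum (f : ExtV V × ExtV V → ℕ) (F : Finset (ExtV V × ExtV V)) : ℕ :=
  ∑ e ∈ F, f e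

/-- Embedding of a set of original nodes into the extended graph. -/
def extW (W : Finset V) : Finset (ExtV V) := W.image orig

/-- A walk in the support graph `G^f_ext`: consecutive nodes are joined by extended
edges carrying positive flow. -/
def IsSupportWalk (N : Network V) (R : Request V) (f : ExtV V × ExtV V → ℕ)
    (p : List (ExtV V)) : Prop :=
  p.Chain' fun a b => (a, b) ∈ Eext N R ∧ 1 ≤ f (a, b)

/-- (IP-1): flow conservation at all original nodes. -/
def IP1 (N : Network V) (R : Request V) (f : ExtV V × ExtV V → ℕ) : Prop :=
  ∀ v : V, fSum f (outV (Eext N R) (orig v)) = fSum f (inV (Eext N R) (orig v))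

/-- (IP-2): connectivity inequalities for activated Steiner sites. -/
def IP2 (N : Network V) (R : Request V) (x : V → ℕ) (f : ExtV V × ExtV V → ℕ) : Prop :=
  ∀ W : Finset V, ∀ s ∈ W, s ∈ R.S → x s ≤ fSum f (outSet (ERext N R) (extW W))

/-- (IP-3): directed Steiner cuts for terminals. -/
def IP3 (N : Network V) (R : Request V) (f : ExtV V × ExtV V → ℕ) : Prop :=
  ∀ W : Finset V, (W ∩ R.T).Nonempty → 1 ≤ fSum f (outSet (ERext N R) (extW W))

/-- Feasibility for the integer program IP-A-CVSAP. -/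
def IPFeasible (N : Network V) (R : Request V) (x : V → ℕ) (f : ExtV V × ExtV V → ℕ) : Prop :=
  (∀ s ∈ R.S, x s ≤ 1) ∧
  IP1 N R f ∧
  IP2 N R x f ∧
  IP3 N R f ∧
  (∀ s ∈ R.S, x s ≤ f (orig s, sinkS)) ∧
  (∀ s ∈ R.S, f (orig s, sinkS) ≤ R.uS s * x s) ∧
  f (orig R.root, sinkR) ≤ R.ur ∧
  (∀ e ∈ N.E, f (orig e.1, orig e.2) ≤ N.uE e) ∧
  (∀ t ∈ R.T, f (src, orig t) = 1) ∧
  (∀ s ∈ R.S, f (src, orig s) = x s)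

/-- Objective value of IP-A-CVSAP. -/
noncomputable def costIP (N : Network V) (R : Request V) (x : V → ℕ)
    (f : ExtV V × ExtV V → ℕ) : ℝ :=
  ∑ e ∈ N.E, N.cE e * f (orig e.1, orig e.2) + ∑ s ∈ R.S, R.cS s * x s

/-- A Virtual Arborescence: nodes, virtual edges and the mapping of virtual edges
onto paths in the underlying graph. -/
structure VirtArb (V : Type) where
  VT : Finset V
  ET : Finset (V × V)
  pi : V × V → List V

/-- `p` is a simple directed path in `N` from `u` to `v`. -/
def IsPathInG (N : Network V) (p : List V) (u v : V) : Prop :=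
  p.Chain' (fun a b => (a, b) ∈ N.E) ∧ p.head? = some u ∧ p.getLast? = some v ∧ p.Nodup

/-- The virtual edges whose path uses the edge `e` of the underlying graph. -/
def pathUses (TA : VirtArb V) (e : V × V) : Finset (V × V) :=
  TA.ET.filter fun d => e ∈ (TA.pi d).zip (TA.pi d).tail

/-- `|π(E_T)[e]|`: the number of paths of the virtual arborescence using edge `e`. -/
def pathCount (TA : VirtArb V) (e : V × V) : ℕ := (pathUses TA e).card

/-- Total degree of node `v` with respect to the virtual edge set `ET`. -/
def degTotal (ET : Finset (V × V)) (v : V) : ℕ :=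
  (ET.filter fun e => e.1 = v).card + (ET.filter fun e => e.2 = v).card

/-- `(VT, ET, r)` is an arborescence rooted at `r` with all edges oriented towards `r`. -/
def ArborTowards (VT : Finset V) (ET : Finset (V × V)) (r : V) : Prop :=
  (∀ e ∈ ET, e.1 ∈ VT ∧ e.2 ∈ VT ∧ e.1 ≠ e.2) ∧
  (∀ v ∈ VT, v ≠ r → (ET.filter fun e => e.1 = v).card = 1) ∧
  (∀ e ∈ ET, e.1 ≠ r) ∧
  (∀ v ∈ VT, ∃ p : List V, p.Chain' (fun a b => (a, b) ∈ ET) ∧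
      p.head? = some v ∧ p.getLast? = some r)

/-- `(VT, ET, r)` is an arborescence rooted at `r` with all edges oriented away from `r`. -/
def ArborAway (VT : Finset V) (ET : Finset (V × V)) (r : V) : Prop :=
  (∀ e ∈ ET, e.1 ∈ VT ∧ e.2 ∈ VT ∧ e.1 ≠ e.2) ∧
  (∀ v ∈ VT, v ≠ r → (ET.filter fun e => e.2 = v).card = 1) ∧
  (∀ e ∈ ET, e.2 ≠ r) ∧
  (∀ v ∈ VT, ∃ p : List V, p.Chain' (fun a b => (a, b) ∈ ET) ∧
      p.head? = some r ∧ p.getLast? = some v)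

/-- Feasible solutions of A-CVSAP: all arborescence edges oriented towards the root. -/
def FeasibleACVSAP (N : Network V) (R : Request V) (TA : VirtArb V) : Prop :=
  R.root ∈ TA.VT ∧
  ArborTowards TA.VT TA.ET R.root ∧
  (∀ d ∈ TA.ET, IsPathInG N (TA.pi d) d.1 d.2) ∧
  R.T ⊆ TA.VT ∧
  TA.VT ⊆ insert R.root (R.S ∪ R.T) ∧
  (∀ t ∈ R.T, degTotal TA.ET t = 1) ∧
  degTotal TA.ET R.root ≤ R.ur ∧
  (∀ s ∈ R.S, s ∈ TA.VT → degTotal TA.ET s ≤ R.uS s + 1) ∧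
  (∀ e ∈ N.E, pathCount TA e ≤ N.uE e)

/-- Feasible solutions of M-CVSAP: all arborescence edges oriented away from the root. -/
def FeasibleMCVSAP (N : Network V) (R : Request V) (TA : VirtArb V) : Prop :=
  R.root ∈ TA.VT ∧
  ArborAway TA.VT TA.ET R.root ∧
  (∀ d ∈ TA.ET, IsPathInG N (TA.pi d) d.1 d.2) ∧
  R.T ⊆ TA.VT ∧
  TA.VT ⊆ insert R.root (R.S ∪ R.T) ∧
  (∀ t ∈ R.T, degTotal TA.ET t = 1) ∧
  degTotal TA.ET R.root ≤ R.ur ∧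
  (∀ s ∈ R.S, s ∈ TA.VT → degTotal TA.ET s ≤ R.uS s + 1) ∧
  (∀ e ∈ N.E, pathCount TA e ≤ N.uE e)

/-- Cost of a virtual arborescence. -/
noncomputable def costCVSAP (N : Network V) (R : Request V) (TA : VirtArb V) : ℝ :=
  ∑ e ∈ N.E, N.cE e * pathCount TA e + ∑ s ∈ R.S.filter (· ∈ TA.VT), R.cS s

/-! Summing flow conservation over all original nodes, the flow leaving `V_G` (to the root sink
and the Steiner sink) equals the flow entering it from the super source, which is `∑ x_s` because
terminals inject nothing. Each Steiner sink edge already carries at least `x_s`, so the root sink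
edge carries no flow; as it is the only edge of `E_R` leaving `V_G`, the cut `W = V_G` in (IP-2)
forces `x_s = 0`. -/

open Finset

theorem Finset.sum_leaving_eq_sum_entering_of_conservation {α M : Type*} [DecidableEq α]
    [AddCancelCommMonoid M] (E : Finset (α × α)) (W : Finset α) (f : α × α → M)
    (hcons : ∀ v ∈ W, ∑ e ∈ E with e.1 = v, f e = ∑ e ∈ E with e.2 = v, f e) :
    ∑ e ∈ E with e.1 ∈ W ∧ e.2 ∉ W, f e =
      ∑ e ∈ E with e.2 ∈ W ∧ e.1 ∉ W, f e := by
  -- both sides, plus the flow on edges inside `W`, equal the conservation sum over `W`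
  have hout := sum_filter_add_sum_filter_not (E.filter (·.1 ∈ W)) (·.2 ∈ W) f
  have hin := sum_filter_add_sum_filter_not (E.filter (·.2 ∈ W)) (·.1 ∈ W) f
  simp only [filter_filter] at hout hin
  rw [← sum_fiberwise_eq_sum_filter E W Prod.fst, sum_congr rfl hcons,
    sum_fiberwise_eq_sum_filter E W Prod.snd, ← hin] at hout
  rw [filter_congr fun e _ => and_comm] at hout
  exact add_left_cancel hout

section Boundary

variable [Fintype V] (N : Network V) (R : Request V)

theorem outSet_Eext_extW_univ :
    outSet (Eext N R) (extW univ) =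
      insert (orig R.root, sinkR) (R.S.image fun s => (orig s, sinkS)) := by
  ext ⟨a, b⟩
  cases a <;> cases b <;> simp [outSet, Eext, extW]

theorem filter_Eext_entering_extW_univ :
    (Eext N R).filter (fun e => e.2 ∈ extW univ ∧ e.1 ∉ extW univ) =
      (R.S ∪ R.T).image fun v => (src, orig v) := by
  ext ⟨a, b⟩
  cases a <;> cases b <;> simp [Eext, extW, or_comm]

theorem outSet_ERext_extW_univ :
    outSet (ERext N R) (extW univ) = {(orig R.root, sinkR)} := by
  ext ⟨a, b⟩
  cases a <;> cases b <;> simp [outSet, ERext, Eext, extW]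

end Boundary

theorem flow_root_sinkR_eq_zero [Fintype V] {N : Network V} {R : Request V} {x : V → ℕ}
    {f : ExtV V × ExtV V → ℕ} (h1 : IP1 N R f) (h9 : ∀ s ∈ R.S, f (src, orig s) = x s)
    (hT0 : ∀ t ∈ R.T, f (src, orig t) = 0) (h4 : ∀ s ∈ R.S, x s ≤ f (orig s, sinkS)) :
    f (orig R.root, sinkR) = 0 := by
  have hbal : fSum f (outSet (Eext N R) (extW univ)) =
      ∑ e ∈ Eext N R with e.2 ∈ extW univ ∧ e.1 ∉ extW univ, f e :=
    sum_leaving_eq_sum_entering_of_conservation _ _ f fun _ hw => by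
      obtain ⟨v, -, rfl⟩ := mem_image.1 hw
      exact h1 v
  have hin : ∑ v ∈ R.S ∪ R.T, f (src, orig v) = ∑ s ∈ R.S, x s := by
    rw [← sum_subset subset_union_left fun v hv hvS => hT0 v ?_]
    · exact sum_congr rfl h9
    · simpa [hvS] using hv
  rw [fSum, outSet_Eext_extW_univ, filter_Eext_entering_extW_univ, sum_insert (by simp),
    sum_image (by simp), sum_image (by simp), hin] at hbal
  have := sum_le_sum h4
  omega

theorem no_terminal_flow_no_active_steiner_general [Fintype V] (N : Network V) (R : Request V)
    (x : V → ℕ) (f : ExtV V × ExtV V → ℕ)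
    (h1 : IP1 N R f) (h2 : IP2 N R x f)
    (h9 : ∀ s ∈ R.S, f (ExtV.src, ExtV.orig s) = x s)
    (hT0 : ∀ t ∈ R.T, f (ExtV.src, ExtV.orig t) = 0)
    (h4 : ∀ s ∈ R.S, x s ≤ f (ExtV.orig s, ExtV.sinkS)) :
    ∀ s ∈ R.S, x s = 0 := by
  intro s hs
  have hcut := h2 univ s (mem_univ s) hs
  rw [outSet_ERext_extW_univ, fSum, sum_singleton, flow_root_sinkR_eq_zero h1 h9 hT0 h4] at hcut
  exact Nat.eq_zero_of_le_zero hcut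

theorem no_terminal_flow_no_active_steiner [Fintype V] (N : Network V) (R : Request V)
    (hWF : RequestWF N R) (x : V → ℕ) (f : ExtV V × ExtV V → ℕ)
    (hf0 : ∀ e ∉ Eext N R, f e = 0)
    (hx01 : ∀ s ∈ R.S, x s ≤ 1)
    (h1 : IP1 N R f) (h2 : IP2 N R x f)
    (h9 : ∀ s ∈ R.S, f (ExtV.src, ExtV.orig s) = x s)
    (hT0 : ∀ t ∈ R.T, f (ExtV.src, ExtV.orig t) = 0)
    (h4 : ∀ s ∈ R.S, x s ≤ f (ExtV.orig s, ExtV.sinkS)) :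
    ∀ s ∈ R.S, x s = 0 :=
  no_terminal_flow_no_active_steiner_general N R x f h1 h2 h9 hT0 h4
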